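/- Let c ≥ 0, β < 0, g > 0, λ > 0, and let J : ℝ → ℝ be continuous, strictly positive, and 2π-periodic. If λ/ρ_c(λ) ≥ (g/(2|β|)) · max_{x∈ℝ} J(x), then every differentiable φ : ℝ → ℝ satisfying φ'(z) = λ h(φ(z)) + λ g R_λ(z) w(φ(z)) for all z ∈ ℝ and φ(0) = π satisfies φ(π) − φ(−π) < 2π. -/

import Mathlib

/-- The Heaviside step function. -/
noncomputable def Heav (z : ℝ) : ℝ := if z < 0 then 0 else 1

/-- The synaptic profile `r_λ(z)`, given by formula (3.10); on `(-π, π) \ {0}` (the only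
values relevant to the integrals below) it equals
`(1/2) e^{-(λz + (c/2)H(z))} [H(z) + (e^{2πλ + c/2} - 1)⁻¹]`. -/
noncomputable def rTheta (c lam z : ℝ) : ℝ :=
  (1 / 2) * Real.exp (-(lam * z + (c / 2) * Heav z)) *
    (Heav z + (Real.exp (2 * Real.pi * lam + c / 2) - 1)⁻¹)

/-- `R_λ(z) = ∫_{-π}^{π} J(z - y) r_λ(y) dy` (formula (3.13)). -/
noncomputable def RTheta (J : ℝ → ℝ) (c lam z : ℝ) : ℝ :=
  ∫ y in (-Real.pi)..Real.pi, J (z - y) * rTheta c lam y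

/-- `h(θ) = 1 - cos θ + β(1 + cos θ)`. -/
noncomputable def hTheta (β θ : ℝ) : ℝ := 1 - Real.cos θ + β * (1 + Real.cos θ)

/-- `w(θ) = 1 + cos θ`. -/
noncomputable def wTheta (θ : ℝ) : ℝ := 1 + Real.cos θ

/-- `ρ_c(λ) = (e^{2πλ} - 1)/(e^{2πλ + c/2} - 1)`. -/
noncomputable def rhoC (c lam : ℝ) : ℝ :=
  (Real.exp (2 * Real.pi * lam) - 1) / (Real.exp (2 * Real.pi * lam + c / 2) - 1)

/-- `f_{c,β}(λ) = (1 - 4βλ²)/(2λ ρ_c(λ))`. -/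
noncomputable def fCB (c β lam : ℝ) : ℝ := (1 - 4 * β * lam ^ 2) / (2 * lam * rhoC c lam)

/-!
The bound `g R_λ ≤ g (max J) ∫ r_λ = g (max J) ρ_c(λ)/(2λ) ≤ |β| = -β` turns the equation into the
differential inequality `φ' ≤ λ (1 - cos φ)`. The comparison equation `θ' = λ (1 - cos θ)` has
equilibria at `0` and `2π`, and since `1 - cos x ≤ |x|` a subsolution cannot reach them in finite
time: a positive `x` with `x' ≥ -λ |x|` stays above a decaying exponential. Applied to `2π - φ(t)`
forward from `t = 0` and to `φ(-t)`, this gives `φ(π) < 2π` and `φ(-π) > 0`.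
-/

open MeasureTheory Real Set

theorem one_sub_cos_le_abs (x : ℝ) : 1 - cos x ≤ |x| := by
  have hquad : 1 - cos x ≤ x ^ 2 / 2 := by linarith [one_sub_sq_div_two_le_cos (x := x)]
  rcases le_total |x| 2 with hx | hx
  · nlinarith [sq_abs x, abs_nonneg x]
  · linarith [neg_one_le_cos x]

theorem pos_of_neg_mul_abs_le_deriv {x x' : ℝ → ℝ} {k a b : ℝ}
    (hx : ∀ t ∈ Icc a b, HasDerivAt x (x' t) t) (hbound : ∀ t ∈ Ico a b, -(k * |x t|) ≤ x' t)
    (ha : 0 < x a) (hab : a ≤ b) : 0 < x b := by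
  -- rate `k + 1` rather than `k`, so that the comparison is strict where the graphs touch
  set E : ℝ → ℝ := fun t => x a * exp (-((k + 1) * (t - a))) with hE
  have hEpos : ∀ t, 0 < E t := fun t => by positivity
  have hE' : ∀ t, HasDerivAt (fun t => -E t) ((k + 1) * E t) t := fun t => by
    refine ((((hasDerivAt_id' t).sub_const a).const_mul (k + 1)).fun_neg.exp.const_mul
      (x a)).fun_neg.congr_deriv ?_
    simp only [hE]
    ring
  have hcmp := image_le_of_deriv_right_lt_deriv_boundary (f := fun t => -x t)
    (fun t ht => (hx t ht).continuousAt.continuousWithinAt.neg)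
    (fun t ht => (hx t (Ico_subset_Icc_self ht)).neg.hasDerivWithinAt)
    (by simp [hE]) hE' ?_ (right_mem_Icc.2 hab)
  · linarith [hEpos b]
  · intro t ht hxt
    have hxt' : x t = E t := neg_injective hxt
    have := hbound t ht
    rw [hxt', abs_of_pos (hEpos t)] at this
    linarith [hEpos t]

theorem lt_two_pi_of_deriv_le_one_sub_cos {φ φ' : ℝ → ℝ} {lam a b : ℝ} (hlam : 0 ≤ lam)
    (hφ : ∀ t ∈ Icc a b, HasDerivAt φ (φ' t) t)
    (hle : ∀ t ∈ Icc a b, φ' t ≤ lam * (1 - cos (φ t))) (ha : φ a < 2 * π) (hab : a ≤ b) :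
    φ b < 2 * π := by
  have hgap := pos_of_neg_mul_abs_le_deriv (x := fun t => 2 * π - φ t) (k := lam)
    (fun t ht => (hφ t ht).const_sub (2 * π)) (fun t ht => ?_) (by linarith) hab
  · linarith
  · have hcos : cos (φ t) = cos (2 * π - φ t) := (cos_two_pi_sub _).symm
    have := hle t (Ico_subset_Icc_self ht)
    nlinarith [one_sub_cos_le_abs (2 * π - φ t)]

theorem pos_of_deriv_le_one_sub_cos {φ φ' : ℝ → ℝ} {lam a b : ℝ} (hlam : 0 ≤ lam)
    (hφ : ∀ t ∈ Icc a b, HasDerivAt φ (φ' t) t)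
    (hle : ∀ t ∈ Icc a b, φ' t ≤ lam * (1 - cos (φ t))) (hb : 0 < φ b) (hab : a ≤ b) :
    0 < φ a := by
  have hmem : ∀ t ∈ Icc (-b) (-a), -t ∈ Icc a b := fun t ht =>
    ⟨by linarith [ht.2], by linarith [ht.1]⟩
  have := pos_of_neg_mul_abs_le_deriv (x := fun t => φ (-t)) (k := lam)
    (fun t ht => (hφ (-t) (hmem t ht)).comp t (hasDerivAt_neg t)) (fun t ht => ?_)
    (by simpa using hb) (neg_le_neg hab)
  · simpa using this
  · have := hle (-t) (hmem t (Ico_subset_Icc_self ht))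
    nlinarith [one_sub_cos_le_abs (φ (-t))]

theorem integral_eq_of_eqOn_Ioo_mul_exp {f : ℝ → ℝ} {p q C lam : ℝ} (hpq : p ≤ q)
    (hlam : lam ≠ 0) (hC : 0 ≤ C) (hf : ∀ y ∈ Ioo p q, f y = C * exp (-(lam * y))) :
    IntervalIntegrable f volume p q ∧
      ∫ y in p..q, f y = C * (exp (-(lam * p)) - exp (-(lam * q))) / lam := by
  set F : ℝ → ℝ := fun y => -(C * exp (-(lam * y)) / lam) with hF
  have hFderiv : ∀ y, HasDerivAt F (C * exp (-(lam * y))) y := fun y => by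
    refine ((((hasDerivAt_id' y).const_mul lam).fun_neg.exp.const_mul C).div_const lam).fun_neg
      |>.congr_deriv ?_
    field_simp
  have hFcont : ContinuousOn F (Icc p q) := fun y _ => (hFderiv y).continuousAt.continuousWithinAt
  have hderiv : ∀ y ∈ Ioo p q, HasDerivAt F (f y) y := fun y hy => hf y hy ▸ hFderiv y
  have hint : IntervalIntegrable f volume p q :=
    (intervalIntegrable_iff_integrableOn_Ioc_of_le hpq).2 <|
      intervalIntegral.integrableOn_deriv_of_nonneg hFcont hderiv fun y hy =>
        hf y hy ▸ by positivity
  refine ⟨hint, ?_⟩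
  rw [intervalIntegral.integral_eq_sub_of_hasDerivAt_of_le hpq hFcont hderiv hint, hF]
  ring

theorem exp_two_pi_mul_add_sub_one_pos {c lam : ℝ} (hc : 0 ≤ c) (hlam : 0 < lam) :
    0 < exp (2 * π * lam + c / 2) - 1 := by
  have : 0 < 2 * π * lam + c / 2 := by positivity
  linarith [one_lt_exp_iff.2 this]

theorem rhoC_pos {c lam : ℝ} (hc : 0 ≤ c) (hlam : 0 < lam) : 0 < rhoC c lam := by
  have : 0 < 2 * π * lam := by positivity
  exact div_pos (by linarith [one_lt_exp_iff.2 this]) (exp_two_pi_mul_add_sub_one_pos hc hlam)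

theorem rTheta_of_neg (c lam : ℝ) {y : ℝ} (hy : y < 0) :
    rTheta c lam y = 1 / 2 * (exp (2 * π * lam + c / 2) - 1)⁻¹ * exp (-(lam * y)) := by
  simp only [rTheta, Heav, if_pos hy]
  ring_nf

theorem rTheta_of_nonneg (c lam : ℝ) {y : ℝ} (hy : 0 ≤ y) :
    rTheta c lam y =
      1 / 2 * exp (-(c / 2)) * (1 + (exp (2 * π * lam + c / 2) - 1)⁻¹) * exp (-(lam * y)) := by
  rw [rTheta, Heav, if_neg hy.not_gt, mul_one, neg_add, exp_add]
  ring

theorem rTheta_nonneg {c lam : ℝ} (hc : 0 ≤ c) (hlam : 0 < lam) (y : ℝ) : 0 ≤ rTheta c lam y := by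
  have := exp_two_pi_mul_add_sub_one_pos hc hlam
  rcases lt_or_ge y 0 with hy | hy
  · rw [rTheta_of_neg c lam hy]; positivity
  · rw [rTheta_of_nonneg c lam hy]; positivity

theorem integral_rTheta {c lam : ℝ} (hc : 0 ≤ c) (hlam : 0 < lam) :
    IntervalIntegrable (rTheta c lam) volume (-π) π ∧
      ∫ y in (-π)..π, rTheta c lam y = rhoC c lam / (2 * lam) := by
  have hD := exp_two_pi_mul_add_sub_one_pos hc hlam
  obtain ⟨hintL, hL⟩ := integral_eq_of_eqOn_Ioo_mul_exp (neg_nonpos.2 pi_pos.le) hlam.ne'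
    (by positivity) fun y hy => rTheta_of_neg c lam hy.2
  obtain ⟨hintR, hR⟩ := integral_eq_of_eqOn_Ioo_mul_exp pi_pos.le hlam.ne'
    (by positivity) fun y hy => rTheta_of_nonneg c lam hy.1.le
  refine ⟨hintL.trans hintR, ?_⟩
  rw [← intervalIntegral.integral_add_adjacent_intervals hintL hintR, hL, hR]
  set A := exp (lam * π)
  set E := exp (c / 2)
  have hA : 0 < A := exp_pos _
  have hE : 0 < E := exp_pos _
  have h2 : exp (2 * π * lam) = A ^ 2 := by rw [← exp_nat_mul]; ring_nf
  have h3 : exp (2 * π * lam + c / 2) = A ^ 2 * E := by rw [exp_add, h2]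
  rw [h3] at hD
  rw [rhoC, h2, h3, mul_neg, neg_neg, mul_zero, neg_zero, exp_zero, exp_neg, exp_neg]
  field_simp
  ring

theorem RTheta_le {J : ℝ → ℝ} {c lam M : ℝ} (hc : 0 ≤ c) (hlam : 0 < lam) (hJ : Continuous J)
    (hJM : ∀ x, J x ≤ M) (z : ℝ) : RTheta J c lam z ≤ M * (rhoC c lam / (2 * lam)) := by
  obtain ⟨hint, hintegral⟩ := integral_rTheta hc hlam
  calc RTheta J c lam z ≤ ∫ y in (-π)..π, M * rTheta c lam y :=
        intervalIntegral.integral_mono_on (by linarith [pi_pos])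
          (hint.continuousOn_mul (hJ.comp (continuous_sub_left z)).continuousOn)
          (hint.const_mul M)
          fun y _ => mul_le_mul_of_nonneg_right (hJM _) (rTheta_nonneg hc hlam y)
    _ = M * (rhoC c lam / (2 * lam)) := by rw [intervalIntegral.integral_const_mul, hintegral]

theorem hTheta_add_mul_wTheta_le {β s : ℝ} (hs : β + s ≤ 0) (θ : ℝ) :
    hTheta β θ + s * wTheta θ ≤ 1 - cos θ := by
  have : 0 ≤ 1 + cos θ := by linarith [neg_one_le_cos θ]
  simp only [hTheta, wTheta]
  nlinarith

theorem rotating_waves_stmt_15_general (c β g lam : ℝ) (hc : 0 ≤ c) (hβ : β < 0)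
    (hg : 0 < g) (hlam : 0 < lam)
    (J : ℝ → ℝ) (hJcont : Continuous J)
    (hJper : ∀ x : ℝ, J (x + 2 * Real.pi) = J x)
    (hineq : g / (2 * |β|) * sSup (Set.range J) ≤ lam / rhoC c lam) :
    ∀ φ : ℝ → ℝ, Differentiable ℝ φ →
      (∀ z : ℝ, deriv φ z
        = lam * hTheta β (φ z) + lam * g * RTheta J c lam z * wTheta (φ z)) →
      φ 0 = Real.pi →
      φ Real.pi - φ (-Real.pi) < 2 * Real.pi := by
  intro φ hφ hder hφ0
  set M := sSup (Set.range J)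
  have hρ := rhoC_pos hc hlam
  have hβ' : 0 < |β| := abs_pos.2 hβ.ne
  have hJM : ∀ x, J x ≤ M := fun x =>
    le_csSup ((Function.Periodic.compact_of_continuous hJper two_pi_pos.ne' hJcont).bddAbove)
      ⟨x, rfl⟩
  have hgR : ∀ z, g * RTheta J c lam z ≤ -β := fun z => calc
    g * RTheta J c lam z ≤ g * (M * (rhoC c lam / (2 * lam))) :=
      mul_le_mul_of_nonneg_left (RTheta_le hc hlam hJcont hJM z) hg.le
    _ = g / (2 * |β|) * M * (|β| * rhoC c lam / lam) := by field_simp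
    _ ≤ lam / rhoC c lam * (|β| * rhoC c lam / lam) := by gcongr
    _ = -β := by rw [abs_of_neg hβ]; field_simp
  have hle : ∀ z, deriv φ z ≤ lam * (1 - cos (φ z)) := fun z => by
    rw [hder z, mul_assoc lam g, mul_assoc, ← mul_add]
    exact mul_le_mul_of_nonneg_left
      (hTheta_add_mul_wTheta_le (by linarith [hgR z]) (φ z)) hlam.le
  have hπ := pi_pos
  have hright := lt_two_pi_of_deriv_le_one_sub_cos hlam.le (fun t _ => (hφ t).hasDerivAt)
    (fun t _ => hle t) (by linarith) hπ.le
  have hleft := pos_of_deriv_le_one_sub_cos hlam.le (fun t _ => (hφ t).hasDerivAt)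
    (fun t _ => hle t) (by linarith) (neg_nonpos.2 hπ.le)
  linarith

/-- Lemma 5.3 (lemma `ell`): in the excitable case `β < 0`, if
`λ/ρ_c(λ) ≥ (g/(2|β|)) max J`, then the solution of (3.18)-(3.19) satisfies
`φ_λ(π) - φ_λ(-π) < 2π` (i.e. `Ψ(λ) < 1`). -/
theorem rotating_waves_stmt_15 (c β g lam : ℝ) (hc : 0 ≤ c) (hβ : β < 0)
    (hg : 0 < g) (hlam : 0 < lam)
    (J : ℝ → ℝ) (hJcont : Continuous J) (hJpos : ∀ x : ℝ, 0 < J x)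
    (hJper : ∀ x : ℝ, J (x + 2 * Real.pi) = J x)
    (hineq : g / (2 * |β|) * sSup (Set.range J) ≤ lam / rhoC c lam) :
    ∀ φ : ℝ → ℝ, Differentiable ℝ φ →
      (∀ z : ℝ, deriv φ z
        = lam * hTheta β (φ z) + lam * g * RTheta J c lam z * wTheta (φ z)) →
      φ 0 = Real.pi →
      φ Real.pi - φ (-Real.pi) < 2 * Real.pi :=
  rotating_waves_stmt_15_general c β g lam hc hβ hg hlam J hJcont hJper hineq
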